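/- arXiv:2006.00079 — 3 statements merged into one kernel-verified Lean document; each statement's English description precedes it below -/
import Mathlib

section
/- Let Z be a symmetric positive definite 6×6 matrix, J > 0 a real number, and ξ a 3×3 invertible real matrix with entries ξ_{kj}. Define the 3×3 matrices N_{ij} = J·Σ_{l,k=1}^{3} ξ_{li} O_lᵀ Z O_k ξ_{kj}, where O_l are the 6×3 selection matrices of the elastic Voigt formalism. Then N_{ii} is symmetric positive definite for each i, and N_{ij} = N_{ji}ᵀ for all i, j. -/
/-!
Writing `M i = ∑ l, ξ l i • O l`, the block is a congruence `N i j = J • (M i)ᵀ * Z * M j`.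
Symmetry of `Z` gives `N i j = (N j i)ᵀ`, and `N i i` is positive definite as soon as `M i` is
injective. With `c` the `i`-th column of `ξ` (nonzero, as `ξ` is invertible), `M i *ᵥ x` is the
Voigt vector (engineering shears) of the symmetrized outer product `(c xᵀ + x cᵀ) / 2`, which
vanishes only for `x = 0`.
-/

open Matrix

/-- The Voigt selection matrices `O₁, O₂, O₃` (given by their transposes). -/
def voigtO : Fin 3 → Matrix (Fin 6) (Fin 3) ℝ
  | 0 => (!![1,0,0,0,0,0; 0,0,0,0,0,1; 0,0,0,0,1,0] : Matrix (Fin 3) (Fin 6) ℝ)ᵀ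
  | 1 => (!![0,0,0,0,0,1; 0,1,0,0,0,0; 0,0,0,1,0,0] : Matrix (Fin 3) (Fin 6) ℝ)ᵀ
  | 2 => (!![0,0,0,0,1,0; 0,0,0,1,0,0; 0,0,1,0,0,0] : Matrix (Fin 3) (Fin 6) ℝ)ᵀ

namespace Matrix

variable {ι m n K R : Type*}

theorem col_ne_zero_of_isUnit [Fintype n] [Field K] [DecidableEq n] {A : Matrix n n K}
    (hA : IsUnit A) (j : n) : A.col j ≠ 0 := by
  rw [← mulVec_single_one]
  intro h
  have := (mulVec_injective_iff_isUnit.2 hA) (h.trans (mulVec_zero A).symm)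
  simpa using congrFun this j

theorem sum_sum_smul_transpose_mul_mul [Fintype ι] [Fintype n] [CommSemiring R]
    (A : ι → Matrix n m R) (Z : Matrix n n R) (a b : ι → R) :
    ∑ l, ∑ k, (a l * b k) • ((A l)ᵀ * Z * A k) = (∑ l, a l • A l)ᵀ * Z * ∑ k, b k • A k := by
  simp only [transpose_sum, transpose_smul, Matrix.sum_mul, Matrix.mul_sum, Matrix.smul_mul,
    Matrix.mul_smul, Finset.smul_sum, smul_smul]
  rw [Finset.sum_comm]
  simp only [mul_comm]

theorem eq_zero_of_vecMulVec_add_vecMulVec_eq_zero [CommRing R] [NoZeroDivisors R]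
    [NeZero (2 : R)] {c x : n → R} (hc : c ≠ 0) (h : vecMulVec c x + vecMulVec x c = 0) :
    x = 0 := by
  have hentry : ∀ l k, c l * x k + x l * c k = 0 := fun l k => by
    simpa only [add_apply, vecMulVec_apply, zero_apply] using congrFun (congrFun h l) k
  obtain ⟨l, hl⟩ := Function.ne_iff.mp hc
  have hxl : x l = 0 := by
    have : 2 * (c l * x l) = 0 := by linear_combination hentry l l
    exact (mul_eq_zero.1 ((mul_eq_zero.1 this).resolve_left two_ne_zero)).resolve_left hl
  funext k
  have : c l * x k = 0 := by simpa [hxl] using hentry l k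
  exact (mul_eq_zero.1 this).resolve_left hl

end Matrix

theorem sum_smul_voigtO_mulVec (c x : Fin 3 → ℝ) :
    (∑ l, c l • voigtO l) *ᵥ x = ![c 0 * x 0, c 1 * x 1, c 2 * x 2,
      c 2 * x 1 + c 1 * x 2, c 2 * x 0 + c 0 * x 2, c 1 * x 0 + c 0 * x 1] := by
  ext k
  fin_cases k <;> simp [voigtO, mulVec, dotProduct, Fin.sum_univ_three, Matrix.sum_apply]

theorem vecMulVec_add_vecMulVec_eq_zero_of_sum_smul_voigtO_mulVec_eq_zero {c x : Fin 3 → ℝ}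
    (h : (∑ l, c l • voigtO l) *ᵥ x = 0) : vecMulVec c x + vecMulVec x c = 0 := by
  rw [sum_smul_voigtO_mulVec] at h
  obtain ⟨h0, h1, h2, h3, h4, h5⟩ : c 0 * x 0 = 0 ∧ c 1 * x 1 = 0 ∧ c 2 * x 2 = 0 ∧
      c 2 * x 1 + c 1 * x 2 = 0 ∧ c 2 * x 0 + c 0 * x 2 = 0 ∧ c 1 * x 0 + c 0 * x 1 = 0 := by
    simpa [funext_iff, Fin.forall_fin_succ] using h
  ext l k
  fin_cases l <;> fin_cases k <;> simp [vecMulVec_apply] <;> linarith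

theorem sum_smul_voigtO_mulVec_injective {c : Fin 3 → ℝ} (hc : c ≠ 0) :
    Function.Injective (∑ l, c l • voigtO l).mulVec :=
  (injective_iff_map_eq_zero (∑ l, c l • voigtO l).mulVecLin).2 fun _ hx =>
    eq_zero_of_vecMulVec_add_vecMulVec_eq_zero hc
      (vecMulVec_add_vecMulVec_eq_zero_of_sum_smul_voigtO_mulVec_eq_zero hx)

theorem stmt_5 (Z : Matrix (Fin 6) (Fin 6) ℝ) (hZ : Z.PosDef)
    (J : ℝ) (hJ : 0 < J)
    (ξ : Matrix (Fin 3) (Fin 3) ℝ) (hξ : IsUnit ξ)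
    (N : Fin 3 → Fin 3 → Matrix (Fin 3) (Fin 3) ℝ)
    (hN : ∀ i j, N i j =
      J • ∑ l : Fin 3, ∑ k : Fin 3, (ξ l i * ξ k j) • ((voigtO l)ᵀ * Z * voigtO k)) :
    (∀ i, (N i i).PosDef) ∧ (∀ i j, N i j = (N j i)ᵀ) := by
  set M : Fin 3 → Matrix (Fin 6) (Fin 3) ℝ := fun i => ∑ l, ξ l i • voigtO l
  have hN_eq : ∀ i j, N i j = J • ((M i)ᵀ * Z * M j) := fun i j => by
    rw [hN, sum_sum_smul_transpose_mul_mul]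
  refine ⟨fun i => ?_, fun i j => ?_⟩
  · have hM := hZ.conjTranspose_mul_mul_same
      (sum_smul_voigtO_mulVec_injective (col_ne_zero_of_isUnit hξ i))
    rw [conjTranspose_eq_transpose_of_trivial] at hM
    rw [hN_eq]
    exact hM.smul hJ
  · have hZ_symm : Zᵀ = Z := hZ.isHermitian.eq
    rw [hN_eq, hN_eq, transpose_smul, transpose_mul, transpose_mul, transpose_transpose, hZ_symm,
      Matrix.mul_assoc]
end

section
/- Suppose v: ℝ → ℝⁿ satisfies the two-step recurrence v^{n+1} = 2vⁿ - v^{n-1} + Δt² M vⁿ for a symmetric matrix M with eigenvalues in [-4/Δt², 0] (i.e., -Δt² M has spectral radius at most 4 and M is negative semi-definite). Then the discrete quantity Eⁿ = ((v^{n+1} - vⁿ)/Δt)ᵀ((v^{n+1} - vⁿ)/Δt) - (vⁿ)ᵀ M v^{n+1} is independent of n. -/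
/-!
Multiplying by `Δt²`, the energy is `F k = |v (k+1) - v k|² - Δt² ⟨v k, M v (k+1)⟩`. With
`a, b, c = v k, v (k+1), v (k+2)`, symmetry of `M` gives
`F (k+1) - F k = ⟨c - (2b - a + Δt² M b), c - a⟩`, whose first factor vanishes by the recurrence.
-/

open Matrix

namespace Matrix

variable {ι R : Type*} [Fintype ι] [CommRing R]

theorem IsSymm.dotProduct_mulVec_comm {M : Matrix ι ι R} (hM : M.IsSymm) (x y : ι → R) :
    x ⬝ᵥ M *ᵥ y = y ⬝ᵥ M *ᵥ x := by
  rw [dotProduct_mulVec, ← mulVec_transpose, hM.eq, dotProduct_comm]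

def leapfrogEnergy (M : Matrix ι ι R) (h : R) (v : ℕ → ι → R) (k : ℕ) : R :=
  (v (k + 1) - v k) ⬝ᵥ (v (k + 1) - v k) - h * v k ⬝ᵥ M *ᵥ v (k + 1)

theorem IsSymm.leapfrogEnergy_succ_sub {M : Matrix ι ι R} (hM : M.IsSymm) (h : R)
    (v : ℕ → ι → R) (k : ℕ) :
    leapfrogEnergy M h v (k + 1) - leapfrogEnergy M h v k =
      (v (k + 2) - (2 • v (k + 1) - v k + h • M *ᵥ v (k + 1))) ⬝ᵥ (v (k + 2) - v k) := by
  have hsymm := hM.dotProduct_mulVec_comm (v (k + 1)) (v (k + 2))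
  simp only [leapfrogEnergy, Nat.add_assoc, Nat.reduceAdd, two_smul, sub_dotProduct,
    add_dotProduct, dotProduct_sub, smul_dotProduct, smul_eq_mul,
    dotProduct_comm (M *ᵥ v (k + 1)), hM.dotProduct_mulVec_comm (v k) (v (k + 1))]
  linear_combination (-h) * hsymm + dotProduct_comm (v (k + 1)) (v (k + 2))
    + dotProduct_comm (v k) (v (k + 1)) - dotProduct_comm (v k) (v (k + 2))

theorem IsSymm.leapfrogEnergy_eq_leapfrogEnergy_zero {M : Matrix ι ι R} (hM : M.IsSymm) {h : R}
    {v : ℕ → ι → R} (hrec : ∀ k, v (k + 2) = 2 • v (k + 1) - v k + h • M *ᵥ v (k + 1))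
    (k : ℕ) : leapfrogEnergy M h v k = leapfrogEnergy M h v 0 := by
  induction k with
  | zero => rfl
  | succ k ih =>
    have hstep := hM.leapfrogEnergy_succ_sub h v k
    rw [← hrec k, sub_self, zero_dotProduct, sub_eq_zero] at hstep
    rw [hstep, ih]

end Matrix

theorem stmt_14_general (n : ℕ) (M : Matrix (Fin n) (Fin n) ℝ) (hM : M.IsSymm)
    (Δt : ℝ) (hΔt : 0 < Δt)
    (v : ℕ → Fin n → ℝ)
    (hrec : ∀ k : ℕ, v (k+2) = 2 • v (k+1) - v k + Δt^2 • M.mulVec (v (k+1)))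
    (E : ℕ → ℝ)
    (hE : ∀ k : ℕ, E k = (Δt⁻¹ • (v (k+1) - v k)) ⬝ᵥ (Δt⁻¹ • (v (k+1) - v k)) -
      v k ⬝ᵥ M.mulVec (v (k+1))) :
    ∀ k l : ℕ, E k = E l := by
  have hE_energy : ∀ k, E k = (Δt ^ 2)⁻¹ * leapfrogEnergy M (Δt ^ 2) v k := by
    intro k
    rw [hE, leapfrogEnergy, smul_dotProduct, dotProduct_smul, smul_eq_mul, smul_eq_mul]
    field_simp
  intro k l
  rw [hE_energy, hE_energy, hM.leapfrogEnergy_eq_leapfrogEnergy_zero hrec,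
    hM.leapfrogEnergy_eq_leapfrogEnergy_zero hrec l]

theorem stmt_14 (n : ℕ) (M : Matrix (Fin n) (Fin n) ℝ) (hM : M.IsSymm)
    (Δt : ℝ) (hΔt : 0 < Δt)
    (hneg : (-M).PosSemidef)
    (hspec : ((4/Δt^2 : ℝ) • (1 : Matrix (Fin n) (Fin n) ℝ) + M).PosSemidef)
    (v : ℕ → Fin n → ℝ)
    (hrec : ∀ k : ℕ, v (k+2) = 2 • v (k+1) - v k + Δt^2 • M.mulVec (v (k+1)))
    (E : ℕ → ℝ)
    (hE : ∀ k : ℕ, E k = (Δt⁻¹ • (v (k+1) - v k)) ⬝ᵥ (Δt⁻¹ • (v (k+1) - v k)) -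
      v k ⬝ᵥ M.mulVec (v (k+1))) :
    ∀ k l : ℕ, E k = E l :=
  stmt_14_general n M hM Δt hΔt v hrec E hE
end

section
/- Let M be symmetric n×n and define the two-step scheme v^{n+1} - 2vⁿ + v^{n-1} = Δt² M̃ vⁿ with M̃ = M + (Δt²/12)M². Then the quantity E^{n+1/2} = ((v^{n+1}-vⁿ)/Δt)ᵀ((v^{n+1}-vⁿ)/Δt) - (vⁿ)ᵀ M v^{n+1} - (Δt²/12)(M vⁿ)ᵀ(M v^{n+1}) satisfies E^{n+1/2} = E^{n-1/2} for all n. -/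
open Matrix

theorem stmt_16 (n : ℕ) (M : Matrix (Fin n) (Fin n) ℝ) (hM : M.IsSymm)
    (Δt : ℝ) (hΔt : 0 < Δt)
    (v : ℕ → Fin n → ℝ)
    (hrec : ∀ k : ℕ, v (k+2) - 2 • v (k+1) + v k =
      Δt^2 • (M + (Δt^2/12) • (M * M)).mulVec (v (k+1)))
    (E : ℕ → ℝ)
    (hE : ∀ k : ℕ, E k = (Δt⁻¹ • (v (k+1) - v k)) ⬝ᵥ (Δt⁻¹ • (v (k+1) - v k)) -
      v k ⬝ᵥ M.mulVec (v (k+1)) - (Δt^2/12) * (M.mulVec (v k) ⬝ᵥ M.mulVec (v (k+1)))) :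
    ∀ k : ℕ, E (k+1) = E k := by
  intro k
  have hsymA : ∀ (A : Matrix (Fin n) (Fin n) ℝ), Aᵀ = A →
      ∀ x y : Fin n → ℝ, (A.mulVec x) ⬝ᵥ y = x ⬝ᵥ A.mulVec y := by
    intro A hA x y
    rw [dotProduct_mulVec, ← Matrix.mulVec_transpose, hA]
  have hM2 : (M * M)ᵀ = M * M := by rw [Matrix.transpose_mul, hM.eq]
  have hM3 : (M * (M * M))ᵀ = M * (M * M) := by
    rw [Matrix.transpose_mul, hM2, hM.eq, mul_assoc]
  have h1 := hsymA M hM.eq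
  have h2 := hsymA (M * M) hM2
  have hc1 : ∀ (A : Matrix (Fin n) (Fin n) ℝ), Aᵀ = A →
      v (k+1) ⬝ᵥ A.mulVec (v k) = v k ⬝ᵥ A.mulVec (v (k+1)) := by
    intro A hA
    rw [← hsymA A hA, dotProduct_comm]
  have hd : v (k+1) ⬝ᵥ v k = v k ⬝ᵥ v (k+1) := dotProduct_comm _ _
  have hw : v (k+2) = Δt^2 • (M + (Δt^2/12) • (M * M)).mulVec (v (k+1)) + v (k+1) + v (k+1) - v k := by
    linear_combination hrec k
  rw [hE (k+1), hE k, hw]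
  simp only [Matrix.add_mulVec, Matrix.smul_mulVec, Matrix.mulVec_add, Matrix.mulVec_sub,
    Matrix.mulVec_smul, mulVec_mulVec, smul_dotProduct, dotProduct_smul, sub_dotProduct,
    dotProduct_sub, add_dotProduct, dotProduct_add, smul_eq_mul, smul_smul, mul_assoc,
    h1, h2, hc1 M hM.eq, hc1 (M*M) hM2, hc1 (M*(M*M)) hM3, hd]
  field_simp
  ring
end
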